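/- arXiv:2506.10485 — 5 statements merged into one kernel-verified Lean document; each statement's English description precedes it below -/
import Mathlib

section
/- Let ω₁, ω₂, ω₃ ∈ ℂ with |ω₁| ≤ 1, |ω₂| ≤ 1, |ω₃| ≤ 1, and let α₁, α₂, β ∈ ℂ. The 3×3 upper-triangular matrix T₃ with rows (ω₁, α₁, β), (0, ω₂, α₂), (0, 0, ω₃) is a contraction (i.e. ‖T₃‖ ≤ 1 for the Euclidean operator norm on ℂ³) if and only if either: (i) |ω₂| < 1, |αᵢ|² ≤ (1−|ωᵢ|²)(1−|ω_{i+1}|²) for i = 1,2, and |β(1−|ω₂|²) + α₁α₂ ω̄₂|² ≤ [(1−|ω₁|²)(1−|ω₂|²) − |α₁|²]·[(1−|ω₂|²)(1−|ω₃|²) − |α₂|²]; or (ii) |ω₂| = 1, α₁ = α₂ = 0, and |β|² ≤ (1−|ω₁|²)(1−|ω₃|²). -/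
open Complex Matrix

/-- The squared modulus of a complex number. -/
noncomputable def nsq (z : ℂ) : ℝ := ‖z‖ ^ 2

/-- The "defect" quantity `1 - |ω|²`. -/
noncomputable def d (ω : ℂ) : ℝ := 1 - ‖ω‖ ^ 2

/-- A square complex matrix is a contraction if its Euclidean operator norm is at most `1`. -/
noncomputable def IsContraction {n : ℕ} (T : Matrix (Fin n) (Fin n) ℂ) : Prop :=
  ‖Matrix.toEuclideanCLM (𝕜 := ℂ) T‖ ≤ 1

/-!
Write `dᵢ = 1 - |ωᵢ|²`. The matrix is a contraction iff
`|ω₁x + α₁y + βz|² ≤ |x|² + P(y, z)` for all `x, y, z`, where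
`P(y, z) = |y|² + |z|² - |ω₂y + α₂z|² - |ω₃z|²` is the defect of the lower `2 × 2` block.
For fixed `y, z` this is a complex quadratic inequality in `x`, which holds for all `x` iff
`P ≥ 0` and `|α₁y + βz|² ≤ d₁ P`. The first condition is `|α₂|² ≤ d₂d₃`; the second is a Hermitian form in
`(y, z)` with diagonal `A = d₁d₂ - |α₁|²`, `C = d₁(d₃ - |α₂|²) - |β|²` and off-diagonal
`k = ᾱ₁β + d₁ω̄₂α₂`, so it amounts to `A, C ≥ 0`, `|k|² ≤ AC`. The identity
`d₂ (AC - |k|²) = d₁ (AB - |γ|²)`, with `B = d₂d₃ - |α₂|²` and `γ = βd₂ + α₁α₂ω̄₂`, turns this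
into the stated criterion. The degenerate cases `d₂ = 0` and `d₁ = 0` are checked directly; when
`A = 0` the criterion forces `γ = 0`, and then `d₂² C = d₁d₂B ≥ 0`.
-/

open ComplexConjugate

lemma nsq_nonneg (z : ℂ) : 0 ≤ nsq z := sq_nonneg _

lemma nsq_zero : nsq 0 = 0 := by simp [nsq]

lemma nsq_eq_zero {z : ℂ} : nsq z = 0 ↔ z = 0 := by simp [nsq]

lemma nsq_neg (z : ℂ) : nsq (-z) = nsq z := by rw [nsq, nsq, norm_neg]

lemma nsq_mul (a b : ℂ) : nsq (a * b) = nsq a * nsq b := by simp only [nsq, norm_mul, mul_pow]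

lemma d_nonneg {ω : ℂ} (hω : ‖ω‖ ≤ 1) : 0 ≤ d ω := by
  rw [d, sub_nonneg]
  exact pow_le_one₀ (norm_nonneg ω) hω

lemma d_pos {ω : ℂ} (hω : ‖ω‖ < 1) : 0 < d ω := by
  rw [d, sub_pos]
  exact pow_lt_one₀ (norm_nonneg ω) hω two_ne_zero

lemma isContraction_iff_forall_nsq_le {n : ℕ} (T : Matrix (Fin n) (Fin n) ℂ) :
    IsContraction T ↔ ∀ v : Fin n → ℂ, ∑ i, nsq ((T *ᵥ v) i) ≤ ∑ i, nsq (v i) := by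
  rw [IsContraction, ContinuousLinearMap.opNorm_le_iff zero_le_one,
    (WithLp.equiv 2 (Fin n → ℂ)).symm.surjective.forall]
  refine forall_congr' fun v => ?_
  rw [WithLp.equiv_symm_apply, one_mul, toEuclideanCLM_toLp,
    ← sq_le_sq₀ (norm_nonneg _) (norm_nonneg _), EuclideanSpace.norm_sq_eq,
    EuclideanSpace.norm_sq_eq]
  rfl

lemma isContraction_upperTriangular_iff (ω₁ ω₂ ω₃ α₁ α₂ β : ℂ) :
    IsContraction !![ω₁, α₁, β; 0, ω₂, α₂; 0, 0, ω₃] ↔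
      ∀ x y z : ℂ, nsq (ω₁ * x + α₁ * y + β * z) + nsq (ω₂ * y + α₂ * z) + nsq (ω₃ * z) ≤
        nsq x + nsq y + nsq z := by
  simp [isContraction_iff_forall_nsq_le, Fin.forall_fin_succ_pi, Fin.forall_fin_zero_pi,
    Fin.sum_univ_three, mulVec, dotProduct]

theorem forall_quadratic_nonneg_iff {p : ℝ} (hp : 0 ≤ p) (ℓ : ℂ) (r : ℝ) :
    (∀ x : ℂ, 0 ≤ p * nsq x + 2 * (conj x * ℓ).re + r) ↔ 0 ≤ r ∧ nsq ℓ ≤ p * r := by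
  constructor
  · intro h
    have hr : 0 ≤ r := by simpa [nsq] using h 0
    -- along the ray `x = -t ℓ` the form is a real quadratic in `t`
    have hdisc := discrim_le_zero (a := p * nsq ℓ) (b := -2 * nsq ℓ) (c := r) fun t => by
      have := h (-t * ℓ)
      simp only [nsq, Complex.sq_norm, Complex.normSq_apply, Complex.mul_re, Complex.mul_im,
        Complex.neg_re, Complex.neg_im, Complex.ofReal_re, Complex.ofReal_im, Complex.conj_re,
        Complex.conj_im] at this ⊢
      linear_combination this
    refine ⟨hr, ?_⟩
    rw [discrim] at hdisc
    simp only [nsq] at hdisc ⊢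
    nlinarith [sq_nonneg ‖ℓ‖, mul_nonneg hp hr]
  · rintro ⟨hr, hℓ⟩ x
    rw [nsq] at hℓ ⊢
    have hre : -(‖x‖ * ‖ℓ‖) ≤ (conj x * ℓ).re := by
      rw [← norm_conj x, ← norm_mul]
      exact neg_le_of_abs_le (abs_re_le_norm _)
    suffices 0 ≤ p * ‖x‖ ^ 2 - 2 * (‖x‖ * ‖ℓ‖) + r by linarith
    rcases hp.eq_or_lt with rfl | hp
    · have : ‖ℓ‖ = 0 := by nlinarith [norm_nonneg ℓ]
      simp [this, hr]
    · -- `p (p X² - 2 X L + r) = (p X - L)² + (p r - L²)`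
      nlinarith [sq_nonneg (p * ‖x‖ - ‖ℓ‖)]

theorem forall_nsq_mul_add_le_iff {ω : ℂ} (hω : ‖ω‖ ≤ 1) (w : ℂ) (s : ℝ) :
    (∀ x, nsq (ω * x + w) ≤ nsq x + s) ↔ 0 ≤ s ∧ nsq w ≤ d ω * s := by
  have expand : ∀ x, nsq x + s - nsq (ω * x + w) =
      d ω * nsq x + 2 * (conj x * -(conj ω * w)).re + (s - nsq w) := by
    intro x
    simp only [nsq, d, Complex.sq_norm, Complex.normSq_apply, Complex.add_re, Complex.add_im,
      Complex.mul_re, Complex.mul_im, Complex.neg_re, Complex.neg_im, Complex.conj_re,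
      Complex.conj_im]
    ring
  have hnsq : nsq (-(conj ω * w)) = (1 - d ω) * nsq w := by
    simp only [nsq, d, norm_neg, norm_mul, Complex.norm_conj]
    ring
  rw [forall_congr' fun x => by rw [← sub_nonneg, expand],
    forall_quadratic_nonneg_iff (d_nonneg hω), hnsq]
  have hd : d ω ≤ 1 := by simp only [d]; nlinarith [norm_nonneg ω]
  constructor <;> rintro ⟨h₁, h₂⟩ <;> constructor <;> nlinarith [d_nonneg hω, nsq_nonneg w]

theorem forall_hermitian_form_nonneg_iff (a c : ℝ) (k : ℂ) :
    (∀ y z : ℂ, 0 ≤ a * nsq y + 2 * (conj y * k * z).re + c * nsq z) ↔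
      0 ≤ a ∧ 0 ≤ c ∧ nsq k ≤ a * c := by
  constructor
  · intro h
    have ha : 0 ≤ a := by simpa [nsq] using h 1 0
    exact ⟨ha, (forall_quadratic_nonneg_iff ha k c).1 fun y => by simpa [nsq] using h y 1⟩
  · rintro ⟨ha, hc, hk⟩ y z
    have hr : 0 ≤ c * nsq z := mul_nonneg hc (nsq_nonneg z)
    have hℓ : nsq (k * z) ≤ a * (c * nsq z) := by
      rw [nsq_mul, ← mul_assoc]
      exact mul_le_mul_of_nonneg_right hk (nsq_nonneg z)
    simpa only [mul_assoc] using (forall_quadratic_nonneg_iff ha (k * z) (c * nsq z)).2 ⟨hr, hℓ⟩ y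

theorem forall_defect_nonneg_iff {ω₂ ω₃ : ℂ} (hω₂ : ‖ω₂‖ ≤ 1) (hω₃ : ‖ω₃‖ ≤ 1) (α₂ : ℂ) :
    (∀ y z : ℂ, 0 ≤ nsq y + nsq z - nsq (ω₂ * y + α₂ * z) - nsq (ω₃ * z)) ↔
      nsq α₂ ≤ d ω₂ * d ω₃ := by
  calc (∀ y z : ℂ, 0 ≤ nsq y + nsq z - nsq (ω₂ * y + α₂ * z) - nsq (ω₃ * z))
      ↔ ∀ z y, nsq (ω₂ * y + α₂ * z) ≤ nsq y + d ω₃ * nsq z := by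
        rw [forall_comm]
        refine forall₂_congr fun z y => ?_
        rw [nsq_mul ω₃, show nsq ω₃ = 1 - d ω₃ by simp [d, nsq]]
        constructor <;> intro h <;> linear_combination h
    _ ↔ ∀ z, 0 ≤ d ω₃ * nsq z ∧ nsq (α₂ * z) ≤ d ω₂ * (d ω₃ * nsq z) :=
        forall_congr' fun z => forall_nsq_mul_add_le_iff hω₂ _ _
    _ ↔ nsq α₂ ≤ d ω₂ * d ω₃ := by
        refine ⟨fun h => by simpa [nsq] using (h 1).2, fun h z => ⟨?_, ?_⟩⟩
        · exact mul_nonneg (d_nonneg hω₃) (nsq_nonneg z)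
        · rw [nsq_mul, ← mul_assoc]
          exact mul_le_mul_of_nonneg_right h (nsq_nonneg z)

theorem forall_nsq_le_d_mul_defect_iff (ω₁ ω₂ ω₃ α₁ α₂ β : ℂ) :
    (∀ y z : ℂ, nsq (α₁ * y + β * z) ≤
        d ω₁ * (nsq y + nsq z - nsq (ω₂ * y + α₂ * z) - nsq (ω₃ * z))) ↔
      0 ≤ d ω₁ * d ω₂ - nsq α₁ ∧ 0 ≤ d ω₁ * (d ω₃ - nsq α₂) - nsq β ∧
        nsq (conj α₁ * β + d ω₁ * conj ω₂ * α₂) ≤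
          (d ω₁ * d ω₂ - nsq α₁) * (d ω₁ * (d ω₃ - nsq α₂) - nsq β) := by
  have expand : ∀ y z, d ω₁ * (nsq y + nsq z - nsq (ω₂ * y + α₂ * z) - nsq (ω₃ * z)) -
      nsq (α₁ * y + β * z) = (d ω₁ * d ω₂ - nsq α₁) * nsq y +
        2 * (conj y * -(conj α₁ * β + d ω₁ * conj ω₂ * α₂) * z).re +
        (d ω₁ * (d ω₃ - nsq α₂) - nsq β) * nsq z := by
    intro y z
    simp only [nsq, d, Complex.sq_norm, Complex.normSq_apply, Complex.add_re, Complex.add_im,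
      Complex.mul_re, Complex.mul_im, Complex.neg_re, Complex.neg_im, Complex.conj_re,
      Complex.conj_im, Complex.ofReal_re, Complex.ofReal_im]
    ring
  rw [forall₂_congr fun y z => by rw [← sub_nonneg, expand], forall_hermitian_form_nonneg_iff,
    nsq_neg]

lemma discriminant_identity (ω₁ ω₂ ω₃ α₁ α₂ β : ℂ) :
    d ω₂ * ((d ω₁ * d ω₂ - nsq α₁) * (d ω₁ * (d ω₃ - nsq α₂) - nsq β) -
        nsq (conj α₁ * β + d ω₁ * conj ω₂ * α₂)) =
      d ω₁ * ((d ω₁ * d ω₂ - nsq α₁) * (d ω₂ * d ω₃ - nsq α₂) -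
        nsq (β * d ω₂ + α₁ * α₂ * conj ω₂)) := by
  simp only [nsq, d, Complex.sq_norm, Complex.normSq_apply, Complex.add_re, Complex.add_im,
    Complex.mul_re, Complex.mul_im, Complex.conj_re, Complex.conj_im, Complex.ofReal_re,
    Complex.ofReal_im]
  ring

lemma corner_coefficient_identity (ω₁ ω₂ ω₃ α₁ α₂ β : ℂ) :
    d ω₂ ^ 2 * (d ω₁ * (d ω₃ - nsq α₂) - nsq β) =
      d ω₁ * d ω₂ * (d ω₂ * d ω₃ - nsq α₂) + (d ω₁ * d ω₂ - nsq α₁) * nsq α₂ * nsq ω₂ -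
        nsq (β * d ω₂ + α₁ * α₂ * conj ω₂) +
        2 * ((β * d ω₂ + α₁ * α₂ * conj ω₂) * conj (α₁ * α₂ * conj ω₂)).re := by
  simp only [nsq, d, Complex.sq_norm, Complex.normSq_apply, Complex.add_re, Complex.add_im,
    Complex.mul_re, Complex.mul_im, Complex.conj_re, Complex.conj_im, Complex.ofReal_re,
    Complex.ofReal_im, map_mul, Complex.conj_conj]
  ring

theorem hermitian_conditions_iff_of_norm_lt_one {ω₁ ω₂ ω₃ α₁ α₂ : ℂ} (β : ℂ)
    (hω₁ : ‖ω₁‖ ≤ 1) (hω₂ : ‖ω₂‖ < 1) (hA : nsq α₁ ≤ d ω₁ * d ω₂) (hB : nsq α₂ ≤ d ω₂ * d ω₃) :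
    (0 ≤ d ω₁ * (d ω₃ - nsq α₂) - nsq β ∧
        nsq (conj α₁ * β + d ω₁ * conj ω₂ * α₂) ≤
          (d ω₁ * d ω₂ - nsq α₁) * (d ω₁ * (d ω₃ - nsq α₂) - nsq β)) ↔
      nsq (β * d ω₂ + α₁ * α₂ * conj ω₂) ≤
        (d ω₁ * d ω₂ - nsq α₁) * (d ω₂ * d ω₃ - nsq α₂) := by
  have hd₂ := d_pos hω₂
  have key := discriminant_identity ω₁ ω₂ ω₃ α₁ α₂ β
  rcases (d_nonneg hω₁).eq_or_lt with hd₁ | hd₁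
  · obtain rfl : α₁ = 0 :=
      nsq_eq_zero.1 (le_antisymm (by simpa [← hd₁] using hA) (nsq_nonneg _))
    simp [← hd₁, nsq, hd₂.ne']
  · constructor
    · rintro ⟨-, h⟩
      have := mul_nonneg hd₂.le (sub_nonneg.2 h)
      rw [key] at this
      exact sub_nonneg.1 (nonneg_of_mul_nonneg_right this hd₁)
    · intro h
      have hk : nsq (conj α₁ * β + d ω₁ * conj ω₂ * α₂) ≤
          (d ω₁ * d ω₂ - nsq α₁) * (d ω₁ * (d ω₃ - nsq α₂) - nsq β) := by
        have := mul_nonneg hd₁.le (sub_nonneg.2 h)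
        rw [← key] at this
        exact sub_nonneg.1 (nonneg_of_mul_nonneg_right this hd₂)
      refine ⟨?_, hk⟩
      rcases (sub_nonneg.2 hA).eq_or_lt with hA₀ | hA₀
      · have hγ : β * d ω₂ + α₁ * α₂ * conj ω₂ = 0 :=
          nsq_eq_zero.1 (le_antisymm (by simpa [← hA₀] using h) (nsq_nonneg _))
        have hC := corner_coefficient_identity ω₁ ω₂ ω₃ α₁ α₂ β
        simp only [hγ, ← hA₀, nsq_zero, zero_mul, Complex.zero_re, mul_zero, add_zero,
          sub_zero] at hC
        refine nonneg_of_mul_nonneg_right ?_ (pow_pos hd₂ 2)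
        rw [hC]
        exact mul_nonneg (mul_nonneg hd₁.le hd₂.le) (sub_nonneg.2 hB)
      · exact nonneg_of_mul_nonneg_right ((nsq_nonneg _).trans hk) hA₀

theorem hermitian_conditions_iff_of_norm_eq_one {ω₂ : ℂ} (hω₂ : ‖ω₂‖ = 1) (ω₁ ω₃ α₁ α₂ β : ℂ) :
    (nsq α₂ ≤ d ω₂ * d ω₃ ∧ 0 ≤ d ω₁ * d ω₂ - nsq α₁ ∧
        0 ≤ d ω₁ * (d ω₃ - nsq α₂) - nsq β ∧
        nsq (conj α₁ * β + d ω₁ * conj ω₂ * α₂) ≤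
          (d ω₁ * d ω₂ - nsq α₁) * (d ω₁ * (d ω₃ - nsq α₂) - nsq β)) ↔
      α₁ = 0 ∧ α₂ = 0 ∧ nsq β ≤ d ω₁ * d ω₃ := by
  have hd₂ : d ω₂ = 0 := by simp [d, hω₂]
  simp only [hd₂, zero_mul, mul_zero, zero_sub, neg_nonneg]
  constructor
  · rintro ⟨hα₂, hα₁, hβ, -⟩
    obtain rfl := nsq_eq_zero.1 (le_antisymm hα₂ (nsq_nonneg α₂))
    obtain rfl := nsq_eq_zero.1 (le_antisymm hα₁ (nsq_nonneg α₁))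
    rw [nsq_zero, sub_zero] at hβ
    exact ⟨rfl, rfl, by linarith⟩
  · rintro ⟨rfl, rfl, hβ⟩
    simp [nsq_zero]
    linarith

theorem contraction_criterion_3x3
    (ω₁ ω₂ ω₃ α₁ α₂ β : ℂ)
    (hω₁ : ‖ω₁‖ ≤ 1) (hω₂ : ‖ω₂‖ ≤ 1) (hω₃ : ‖ω₃‖ ≤ 1) :
    IsContraction !![ω₁, α₁, β; 0, ω₂, α₂; 0, 0, ω₃] ↔
      ((‖ω₂‖ < 1 ∧
        nsq α₁ ≤ d ω₁ * d ω₂ ∧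
        nsq α₂ ≤ d ω₂ * d ω₃ ∧
        nsq (β * (d ω₂ : ℂ) + α₁ * α₂ * (starRingEnd ℂ) ω₂) ≤
          (d ω₁ * d ω₂ - nsq α₁) * (d ω₂ * d ω₃ - nsq α₂))
      ∨ (‖ω₂‖ = 1 ∧ α₁ = 0 ∧ α₂ = 0 ∧ nsq β ≤ d ω₁ * d ω₃)) := by
  calc IsContraction !![ω₁, α₁, β; 0, ω₂, α₂; 0, 0, ω₃]
      ↔ ∀ y z x, nsq (ω₁ * x + (α₁ * y + β * z)) ≤
          nsq x + (nsq y + nsq z - nsq (ω₂ * y + α₂ * z) - nsq (ω₃ * z)) := by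
        simp only [isContraction_upperTriangular_iff, ← add_assoc]
        exact ⟨fun h y z x => by linarith [h x y z], fun h x y z => by linarith [h y z x]⟩
    _ ↔ ∀ y z, 0 ≤ nsq y + nsq z - nsq (ω₂ * y + α₂ * z) - nsq (ω₃ * z) ∧
          nsq (α₁ * y + β * z) ≤
            d ω₁ * (nsq y + nsq z - nsq (ω₂ * y + α₂ * z) - nsq (ω₃ * z)) :=
        forall₂_congr fun y z => forall_nsq_mul_add_le_iff hω₁ _ _
    _ ↔ nsq α₂ ≤ d ω₂ * d ω₃ ∧ 0 ≤ d ω₁ * d ω₂ - nsq α₁ ∧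
          0 ≤ d ω₁ * (d ω₃ - nsq α₂) - nsq β ∧
          nsq (conj α₁ * β + d ω₁ * conj ω₂ * α₂) ≤
            (d ω₁ * d ω₂ - nsq α₁) * (d ω₁ * (d ω₃ - nsq α₂) - nsq β) := by
        simp only [forall_and]
        rw [forall_defect_nonneg_iff hω₂ hω₃, forall_nsq_le_d_mul_defect_iff]
    _ ↔ _ := by
        rcases hω₂.lt_or_eq with h | h
        · simp only [h, h.ne, true_and, false_and, or_false]
          constructor
          · rintro ⟨hB, hA, hCk⟩
            rw [sub_nonneg] at hA
            exact ⟨hA, hB, (hermitian_conditions_iff_of_norm_lt_one β hω₁ h hA hB).1 hCk⟩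
          · rintro ⟨hA, hB, hγ⟩
            exact ⟨hB, sub_nonneg.2 hA,
              (hermitian_conditions_iff_of_norm_lt_one β hω₁ h hA hB).2 hγ⟩
        · simp only [h, lt_irrefl, false_and, false_or, true_and]
          exact hermitian_conditions_iff_of_norm_eq_one h ω₁ ω₃ α₁ α₂ β
end

section
/- Let T be the 4×4 upper-triangular complex matrix with rows (ω₁, α₁, β₁, γ), (0, ω₂, α₂, β₂), (0, 0, ω₃, α₃), (0, 0, 0, ω₄), where |ω₁| ≤ 1, |ω₄| ≤ 1 and |ω₂| = |ω₃| = 1. Then T is a contraction on ℂ⁴ if and only if: α₁ = α₂ = α₃ = 0; |β₁|² ≤ (1−|ω₁|²)(1−|ω₃|²); |β₂|² ≤ (1−|ω₂|²)(1−|ω₄|²); and |γ|² ≤ (1−|ω₁|²)(1−|ω₄|²). -/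
open Complex Matrix

/-!
A unimodular diagonal entry of a contraction forces the rest of its column to vanish (the
column is the image of a unit vector), and, applied to the adjoint, the rest of its row too.
So `ω₂` and `ω₃` kill every `αᵢ` and `βᵢ`, and what is left is the `2 × 2` block
`[[ω₁, γ], [0, ω₄]]` plus an isometric diagonal part. For that block, with `p = |ω₁|`,
`q = |ω₄|`, the identity
`(1 - p²)(u² + v² - (pu + |γ|v)² - q²v²) = ((1 - p²)u - p|γ|v)² + ((1 - p²)(1 - q²) - |γ|²)v²`
gives sufficiency, and testing on `(x, y) = (ω̄₁γ, r)` for a suitable real `r` gives necessity.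
-/

theorem isContraction_iff_sum_norm_sq_le {n : ℕ} (T : Matrix (Fin n) (Fin n) ℂ) :
    IsContraction T ↔ ∀ x : Fin n → ℂ, ∑ i, ‖(T *ᵥ x) i‖ ^ 2 ≤ ∑ i, ‖x i‖ ^ 2 := by
  simp only [IsContraction, ContinuousLinearMap.opNorm_le_iff zero_le_one, one_mul]
  refine ⟨fun h x => ?_, fun h y => ?_⟩
  · simpa [EuclideanSpace.norm_sq_eq, toEuclideanCLM_toLp] using
      pow_le_pow_left₀ (norm_nonneg _) (h (WithLp.toLp 2 x)) 2
  · refine (pow_le_pow_iff_left₀ (norm_nonneg _) (norm_nonneg _) two_ne_zero).mp ?_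
    simpa [EuclideanSpace.norm_sq_eq, toEuclideanCLM_toLp] using h y.ofLp

namespace IsContraction

variable {n : ℕ} {T : Matrix (Fin n) (Fin n) ℂ}

theorem conjTranspose (hT : IsContraction T) : IsContraction Tᴴ := by
  rwa [IsContraction, ← star_eq_conjTranspose, map_star, ContinuousLinearMap.star_eq_adjoint,
    ContinuousLinearMap.adjoint.norm_map]

theorem sum_norm_sq_apply_le_one (hT : IsContraction T) (j : Fin n) :
    ∑ i, ‖T i j‖ ^ 2 ≤ 1 := by
  simpa [mulVec_single_one, Pi.single_apply, apply_ite] using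
    (isContraction_iff_sum_norm_sq_le T).mp hT (Pi.single j 1)

theorem apply_eq_zero_of_norm_apply_self_eq_one (hT : IsContraction T) {j : Fin n}
    (hj : ‖T j j‖ = 1) {i : Fin n} (hij : i ≠ j) : T i j = 0 := by
  have := (Finset.add_le_sum (f := fun i => ‖T i j‖ ^ 2) (fun _ _ => sq_nonneg _)
    (Finset.mem_univ j) (Finset.mem_univ i) hij.symm).trans (hT.sum_norm_sq_apply_le_one j)
  rw [hj] at this
  simpa using this

theorem apply_eq_zero_of_norm_apply_self_eq_one' (hT : IsContraction T) {i : Fin n}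
    (hi : ‖T i i‖ = 1) {j : Fin n} (hij : j ≠ i) : T i j = 0 := by
  simpa using hT.conjTranspose.apply_eq_zero_of_norm_apply_self_eq_one (by simpa using hi) hij

end IsContraction

theorem isContraction_upperTriangular_iff_forall (a b c : ℂ) :
    IsContraction !![a, c; 0, b] ↔
      ∀ x y : ℂ, ‖a * x + c * y‖ ^ 2 + ‖b * y‖ ^ 2 ≤ ‖x‖ ^ 2 + ‖y‖ ^ 2 := by
  rw [isContraction_iff_sum_norm_sq_le]
  refine ⟨fun h x y => ?_, fun h v => ?_⟩
  · simpa [mulVec, dotProduct, Fin.sum_univ_two] using h ![x, y]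
  · simpa [mulVec, dotProduct, Fin.sum_univ_two] using h (v 0) (v 1)

theorem sq_le_mul_one_sub_sq_of_forall {a b c : ℂ}
    (h : ∀ x y : ℂ, ‖a * x + c * y‖ ^ 2 + ‖b * y‖ ^ 2 ≤ ‖x‖ ^ 2 + ‖y‖ ^ 2) :
    ‖c‖ ^ 2 ≤ (1 - ‖a‖ ^ 2) * (1 - ‖b‖ ^ 2) := by
  have ha : ‖a‖ ^ 2 ≤ 1 := by simpa using h 1 0
  by_contra! hlt
  set D := (1 - ‖a‖ ^ 2) * (1 - ‖b‖ ^ 2) - ‖c‖ ^ 2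
  have hD : D < 0 := by simp only [D]; linarith
  -- At `y = 1 - |a|² + u` the test inequality reads
  -- `u²(1 - |b|² - |c|²) + (2u + 1 - |a|²) D ≥ 0`, which fails at `u = -D`.
  set r := 1 - ‖a‖ ^ 2 - D
  have hx := h (starRingEnd ℂ a * c) r
  have hcomb : a * (starRingEnd ℂ a * c) + c * r = ((‖a‖ ^ 2 + r : ℝ) : ℂ) * c := by
    rw [← mul_assoc, mul_conj, normSq_eq_norm_sq]; push_cast; ring
  rw [hcomb, norm_mul, norm_mul, norm_mul, Complex.norm_conj, norm_real, norm_real,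
    Real.norm_eq_abs, Real.norm_eq_abs, abs_of_pos (by linarith : 0 < ‖a‖ ^ 2 + r)] at hx
  nlinarith [mul_nonneg (sq_nonneg D) (sq_nonneg ‖b‖),
    mul_nonneg (sq_nonneg D) (sq_nonneg ‖c‖),
    mul_nonneg (sub_nonneg.mpr ha) (neg_nonneg.mpr hD.le), sq_abs r, sq_pos_of_neg hD]

theorem sq_add_sq_le_of_sq_le_mul_one_sub_sq {p q c u v : ℝ} (hp₀ : 0 ≤ p) (hq₀ : 0 ≤ q)
    (hp : p ≤ 1) (hq : q ≤ 1) (hc : c ^ 2 ≤ (1 - p ^ 2) * (1 - q ^ 2)) :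
    (p * u + c * v) ^ 2 + (q * v) ^ 2 ≤ u ^ 2 + v ^ 2 := by
  rcases hp.lt_or_eq with hp₁ | rfl
  · have hs : 0 < 1 - p ^ 2 := by nlinarith
    refine le_of_mul_le_mul_left ?_ hs
    nlinarith [sq_nonneg ((1 - p ^ 2) * u - p * c * v),
      mul_nonneg (sub_nonneg.mpr hc) (sq_nonneg v)]
  · have hc₀ : c = 0 := by nlinarith
    subst hc₀
    nlinarith [mul_le_mul_of_nonneg_right (pow_le_one₀ hq₀ hq : q ^ 2 ≤ 1) (sq_nonneg v)]

theorem isContraction_upperTriangular_iff_s6 {a b : ℂ} (c : ℂ) (ha : ‖a‖ ≤ 1) (hb : ‖b‖ ≤ 1) :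
    IsContraction !![a, c; 0, b] ↔ nsq c ≤ d a * d b := by
  rw [isContraction_upperTriangular_iff_forall, nsq, d, d]
  refine ⟨sq_le_mul_one_sub_sq_of_forall, fun hc x y => ?_⟩
  have htri : ‖a * x + c * y‖ ≤ ‖a‖ * ‖x‖ + ‖c‖ * ‖y‖ :=
    (norm_add_le _ _).trans_eq (by rw [norm_mul, norm_mul])
  rw [norm_mul]
  nlinarith [pow_le_pow_left₀ (norm_nonneg _) htri 2,
    sq_add_sq_le_of_sq_le_mul_one_sub_sq (u := ‖x‖) (v := ‖y‖) (norm_nonneg a)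
      (norm_nonneg b) ha hb hc]

theorem isContraction_four_iff_two {ω₁ ω₂ ω₃ ω₄ : ℂ} (γ : ℂ) (hω₂ : ‖ω₂‖ = 1)
    (hω₃ : ‖ω₃‖ = 1) :
    IsContraction !![ω₁, 0, 0, γ; 0, ω₂, 0, 0; 0, 0, ω₃, 0; 0, 0, 0, ω₄] ↔
      IsContraction !![ω₁, γ; 0, ω₄] := by
  rw [isContraction_iff_sum_norm_sq_le, isContraction_upperTriangular_iff_forall]
  refine ⟨fun h x y => ?_, fun h v => ?_⟩
  · simpa [mulVec, dotProduct, Fin.sum_univ_four] using h ![x, 0, 0, y]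
  · have := h (v 0) (v 3)
    simp only [norm_mul] at this
    simp [mulVec, dotProduct, Fin.sum_univ_four, hω₂, hω₃]
    linarith

theorem contraction_criterion_4x4_omega2_omega3_unimodular
    (ω₁ ω₂ ω₃ ω₄ α₁ α₂ α₃ β₁ β₂ γ : ℂ)
    (hω₁ : ‖ω₁‖ ≤ 1) (hω₄ : ‖ω₄‖ ≤ 1)
    (hω₂ : ‖ω₂‖ = 1) (hω₃ : ‖ω₃‖ = 1) :
    IsContraction !![ω₁, α₁, β₁, γ; 0, ω₂, α₂, β₂; 0, 0, ω₃, α₃; 0, 0, 0, ω₄] ↔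
      (α₁ = 0 ∧ α₂ = 0 ∧ α₃ = 0 ∧
        nsq β₁ ≤ d ω₁ * d ω₃ ∧
        nsq β₂ ≤ d ω₂ * d ω₄ ∧
        nsq γ ≤ d ω₁ * d ω₄) := by
  have hd₂ : d ω₂ = 0 := by simp [d, hω₂]
  have hd₃ : d ω₃ = 0 := by simp [d, hω₃]
  rw [← isContraction_upperTriangular_iff_s6 γ hω₁ hω₄, ← isContraction_four_iff_two γ hω₂ hω₃]
  constructor
  · intro hT
    obtain rfl : α₁ = 0 :=
      hT.apply_eq_zero_of_norm_apply_self_eq_one (j := 1) hω₂ (i := 0) (by decide)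
    obtain rfl : β₁ = 0 :=
      hT.apply_eq_zero_of_norm_apply_self_eq_one (j := 2) hω₃ (i := 0) (by decide)
    obtain rfl : α₂ = 0 :=
      hT.apply_eq_zero_of_norm_apply_self_eq_one' (i := 1) hω₂ (j := 2) (by decide)
    obtain rfl : β₂ = 0 :=
      hT.apply_eq_zero_of_norm_apply_self_eq_one' (i := 1) hω₂ (j := 3) (by decide)
    obtain rfl : α₃ = 0 :=
      hT.apply_eq_zero_of_norm_apply_self_eq_one' (i := 2) hω₃ (j := 3) (by decide)
    exact ⟨rfl, rfl, rfl, by simp [nsq, hd₃], by simp [nsq, hd₂], hT⟩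
  · rintro ⟨rfl, rfl, rfl, hβ₁, hβ₂, hγ⟩
    obtain rfl : β₁ = 0 := by simpa [nsq, hd₃] using hβ₁
    obtain rfl : β₂ = 0 := by simpa [nsq, hd₂] using hβ₂
    exact hγ
end

section
/- Let ω, α ∈ ℂ with ω ≠ 0 and |α|² + |ω|² ≤ 1, let Σ = |α|² + |ω|², and let M be the 2×2 complex matrix with rows (1−|ω|², −ω̄α) and (−ᾱω, 1−|α|²). Let N be the 2×2 matrix (1/Σ) times the matrix with rows (|α|² + |ω|²·√(1−Σ), −αω̄(1−√(1−Σ))) and (−ᾱω(1−√(1−Σ)), |ω|² + |α|²·√(1−Σ)). Then N is positive semidefinite and N² = M; that is, N is the (unique) positive semidefinite square root of M. -/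
/-!
With `u = (ω̄, ᾱ)` we have `u⋆u = S` and `M = 1 - u u⋆`, while `N = 1 - c u u⋆` for
`c = (1 - √(1 - S)) / S`. Since `(u u⋆)² = S u u⋆`, `N² = 1 - (2c - c²S) u u⋆`, and `2c - c²S = 1`.
Writing `c u u⋆ = cS p` with `p = u u⋆ / S` an orthogonal projection,
`N = (1 - p) + (1 - cS) p` is positive semidefinite because `cS = 1 - √(1 - S) ≤ 1`.
Uniqueness is the uniqueness of positive square roots in the C⋆-algebra of matrices.
-/

open Complex Matrix
open scoped ComplexOrder
open ComplexConjugate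

theorem one_sub_smul_mul_self_of_mul_self_eq_smul {R A : Type*} [CommRing R] [Ring A]
    [Algebra R A] {p : A} {s : R} (hp : p * p = s • p) (c : R) :
    (1 - c • p) * (1 - c • p) = 1 - (2 * c - c ^ 2 * s) • p := by
  simp only [sub_mul, mul_sub, one_mul, mul_one, smul_mul_smul_comm, hp, smul_smul]
  module

namespace Matrix

variable {n 𝕜 : Type*} [Fintype n] [RCLike 𝕜]

theorem vecMulVec_star_mul_self (u : n → 𝕜) :
    vecMulVec u (star u) * vecMulVec u (star u) = (star u ⬝ᵥ u) • vecMulVec u (star u) := by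
  rw [vecMulVec_mul_vecMulVec, vecMulVec_smul]

theorem isStarProjection_inv_dotProduct_smul_vecMulVec {u : n → 𝕜} (hu : u ≠ 0) :
    IsStarProjection ((star u ⬝ᵥ u)⁻¹ • vecMulVec u (star u)) := by
  have hs : star u ⬝ᵥ u ≠ 0 := dotProduct_star_self_eq_zero.not.mpr hu
  refine ⟨?_, ?_⟩
  · rw [IsIdempotentElem, smul_mul_smul_comm, vecMulVec_star_mul_self, smul_smul,
      inv_mul_cancel_right₀ hs]
  · exact .smul (.of_nonneg (inv_nonneg.mpr (dotProduct_star_self_nonneg u)))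
      (posSemidef_vecMulVec_self_star u).isHermitian

theorem vecMulVec_star_fin_two (a b : 𝕜) :
    vecMulVec ![a, b] (star ![a, b]) = !![a * star a, a * star b; b * star a, b * star b] := by
  ext i j
  fin_cases i <;> fin_cases j <;> rfl

variable [DecidableEq n]

open scoped MatrixOrder in
theorem _root_.IsStarProjection.posSemidef_one_sub_smul {p : Matrix n n 𝕜}
    (hp : IsStarProjection p) {c : 𝕜} (hc : c ≤ 1) : (1 - c • p).PosSemidef := by
  rw [show 1 - c • p = (1 - p) + (1 - c) • p by module]
  exact hp.one_sub.nonneg.posSemidef.add (hp.nonneg.posSemidef.smul (sub_nonneg.mpr hc))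

theorem posSemidef_one_sub_smul_vecMulVec {u : n → 𝕜} {c : 𝕜} (hc : c * (star u ⬝ᵥ u) ≤ 1) :
    (1 - c • vecMulVec u (star u)).PosSemidef := by
  rcases eq_or_ne u 0 with rfl | hu
  · simpa using PosSemidef.one
  have hs : star u ⬝ᵥ u ≠ 0 := dotProduct_star_self_eq_zero.not.mpr hu
  rw [← smul_inv_smul₀ hs (vecMulVec u (star u)), smul_smul]
  exact (isStarProjection_inv_dotProduct_smul_vecMulVec hu).posSemidef_one_sub_smul hc

open scoped MatrixOrder in
theorem PosSemidef.eq_of_mul_self_eq {A B : Matrix n n 𝕜} (hA : A.PosSemidef) (hB : B.PosSemidef)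
    (h : A * A = B * B) : A = B :=
  (CFC.mul_self_eq_mul_self_iff A B hA.nonneg hB.nonneg).mp h

end Matrix

theorem one_sub_vecMulVec_conj_fin_two (ω α : ℂ) :
    1 - vecMulVec ![conj ω, conj α] (star ![conj ω, conj α]) =
      !![1 - (‖ω‖ : ℂ) ^ 2, -(conj ω * α); -(conj α * ω), 1 - (‖α‖ : ℂ) ^ 2] := by
  rw [vecMulVec_star_fin_two]
  ext i j
  fin_cases i <;> fin_cases j <;> simp [conj_mul']

theorem one_sub_smul_vecMulVec_conj_fin_two {ω α : ℂ} (h : ‖α‖ ^ 2 + ‖ω‖ ^ 2 ≠ 0) (t : ℝ) :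
    1 - (((1 - t) / (‖α‖ ^ 2 + ‖ω‖ ^ 2) : ℝ) : ℂ) •
        vecMulVec ![conj ω, conj α] (star ![conj ω, conj α]) =
      ((‖α‖ ^ 2 + ‖ω‖ ^ 2 : ℝ) : ℂ)⁻¹ •
        !![((‖α‖ ^ 2 : ℝ) : ℂ) + ((‖ω‖ ^ 2 : ℝ) : ℂ) * t, -(α * conj ω) * (1 - t);
          -(conj α * ω) * (1 - t), ((‖ω‖ ^ 2 : ℝ) : ℂ) + ((‖α‖ ^ 2 : ℝ) : ℂ) * t] := by
  have h' : (‖α‖ : ℂ) ^ 2 + (‖ω‖ : ℂ) ^ 2 ≠ 0 := by exact_mod_cast h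
  rw [vecMulVec_star_fin_two]
  ext i j
  fin_cases i <;> fin_cases j <;>
    simp only [Fin.isValue, Fin.zero_eta, Fin.mk_one, Matrix.sub_apply, Matrix.smul_apply,
      of_apply, cons_val', cons_val_zero, cons_val_one, cons_val_fin_one, one_apply_eq,
      one_apply_ne zero_ne_one, one_apply_ne one_ne_zero, smul_eq_mul, RCLike.star_def, conj_conj,
      conj_mul', ofReal_pow, ofReal_add, ofReal_sub, ofReal_div, ofReal_one] <;>
    field_simp <;>
    ring

theorem sqrt_2x2
    (ω α : ℂ) (hω : ω ≠ 0) (hS : ‖α‖ ^ 2 + ‖ω‖ ^ 2 ≤ 1) :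
    letI S : ℝ := ‖α‖ ^ 2 + ‖ω‖ ^ 2
    letI M : Matrix (Fin 2) (Fin 2) ℂ :=
      !![1 - (‖ω‖ : ℂ) ^ 2, -((starRingEnd ℂ) ω * α);
         -((starRingEnd ℂ) α * ω), 1 - (‖α‖ : ℂ) ^ 2]
    letI N : Matrix (Fin 2) (Fin 2) ℂ :=
      ((S : ℂ))⁻¹ •
        !![((‖α‖ ^ 2 : ℝ) : ℂ) + ((‖ω‖ ^ 2 : ℝ) : ℂ) * ((Real.sqrt (1 - S) : ℝ) : ℂ),
            -(α * (starRingEnd ℂ) ω) * (1 - ((Real.sqrt (1 - S) : ℝ) : ℂ));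
           -((starRingEnd ℂ) α * ω) * (1 - ((Real.sqrt (1 - S) : ℝ) : ℂ)),
            ((‖ω‖ ^ 2 : ℝ) : ℂ) + ((‖α‖ ^ 2 : ℝ) : ℂ) * ((Real.sqrt (1 - S) : ℝ) : ℂ)]
    N.PosSemidef ∧ N * N = M ∧
      ∀ N' : Matrix (Fin 2) (Fin 2) ℂ, N'.PosSemidef → N' * N' = M → N' = N := by
  have hS₀ : ‖α‖ ^ 2 + ‖ω‖ ^ 2 ≠ 0 :=
    (add_pos_of_nonneg_of_pos (sq_nonneg _) (pow_pos (norm_pos_iff.mpr hω) 2)).ne'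
  rw [← one_sub_vecMulVec_conj_fin_two, ← one_sub_smul_vecMulVec_conj_fin_two hS₀]
  set S : ℝ := ‖α‖ ^ 2 + ‖ω‖ ^ 2
  set t : ℝ := Real.sqrt (1 - S)
  set u : Fin 2 → ℂ := ![conj ω, conj α]
  have hu : star u ⬝ᵥ u = S := by
    simp [u, dotProduct, Fin.sum_univ_two, mul_conj', S, add_comm]
  have hc : 2 * ((1 - t) / S) - ((1 - t) / S) ^ 2 * S = 1 := by
    have ht : t ^ 2 = 1 - S := Real.sq_sqrt (sub_nonneg.mpr hS)
    field_simp
    linear_combination -ht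
  have hN_sq : (1 - (((1 - t) / S : ℝ) : ℂ) • vecMulVec u (star u)) *
      (1 - (((1 - t) / S : ℝ) : ℂ) • vecMulVec u (star u)) = 1 - vecMulVec u (star u) := by
    rw [one_sub_smul_mul_self_of_mul_self_eq_smul (vecMulVec_star_mul_self u), hu]
    norm_cast
    rw [hc, one_smul]
  have hN : (1 - (((1 - t) / S : ℝ) : ℂ) • vecMulVec u (star u)).PosSemidef := by
    refine posSemidef_one_sub_smul_vecMulVec ?_
    rw [hu]
    exact_mod_cast (div_mul_cancel₀ (1 - t) hS₀).trans_le (sub_le_self 1 (Real.sqrt_nonneg _))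
  exact ⟨hN, hN_sq, fun N' hN' h => hN'.eq_of_mul_self_eq hN (h.trans hN_sq.symm)⟩
end

section
/- Let ω ∈ ℂ with |ω| < 1, let n ≥ 1, and let T be an n×n complex matrix such that I − ω̄T is invertible. Then T is a contraction (‖T‖ ≤ 1 for the Euclidean operator norm on ℂⁿ) if and only if M_ω(T) = (ωI − T)(I − ω̄T)^{-1} is a contraction. -/
/-! For vectors `x`, `y` of a complex inner product space,
`‖x - ω̄ • y‖² - ‖ω • x - y‖² = (1 - |ω|²) (‖x‖² - ‖y‖²)`, so for `|ω| < 1` we have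
`‖ω • x - y‖ ≤ ‖x - ω̄ • y‖ ↔ ‖y‖ ≤ ‖x‖`. Since `M_ω(T)` sends `(I - ω̄T) x` to `ω x - T x`
and `I - ω̄T` is onto, `M_ω(T)` is a contraction iff `‖ω x - T x‖ ≤ ‖x - ω̄ T x‖` for all `x`,
i.e. iff `‖T x‖ ≤ ‖x‖` for all `x`. -/

open Complex Matrix

/-- The Möbius transformation of a square complex matrix:
`M_ω(T) = (ωI − T)(I − ω̄T)⁻¹`. -/
noncomputable def mobius {n : ℕ} (ω : ℂ) (T : Matrix (Fin n) (Fin n) ℂ) :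
    Matrix (Fin n) (Fin n) ℂ :=
  (ω • (1 : Matrix (Fin n) (Fin n) ℂ) - T) *
    ((1 : Matrix (Fin n) (Fin n) ℂ) - (starRingEnd ℂ) ω • T)⁻¹

section InnerProductSpace

variable {𝕜 E : Type*} [RCLike 𝕜] [SeminormedAddCommGroup E] [InnerProductSpace 𝕜 E]

theorem norm_sub_conj_smul_sq_sub_norm_smul_sub_sq (ω : 𝕜) (x y : E) :
    ‖x - starRingEnd 𝕜 ω • y‖ ^ 2 - ‖ω • x - y‖ ^ 2 = (1 - ‖ω‖ ^ 2) * (‖x‖ ^ 2 - ‖y‖ ^ 2) := by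
  rw [norm_sub_sq (𝕜 := 𝕜), norm_sub_sq (𝕜 := 𝕜), inner_smul_right, inner_smul_left, norm_smul,
    norm_smul, RCLike.norm_conj]
  ring

theorem norm_smul_sub_le_norm_sub_conj_smul_iff {ω : 𝕜} (hω : ‖ω‖ < 1) (x y : E) :
    ‖ω • x - y‖ ≤ ‖x - starRingEnd 𝕜 ω • y‖ ↔ ‖y‖ ≤ ‖x‖ := by
  have hω' : 0 < 1 - ‖ω‖ ^ 2 := by nlinarith [norm_nonneg ω]
  rw [← sq_le_sq₀ (norm_nonneg _) (norm_nonneg _), ← sq_le_sq₀ (norm_nonneg _) (norm_nonneg _),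
    ← sub_nonneg, norm_sub_conj_smul_sq_sub_norm_smul_sub_sq, mul_nonneg_iff_of_pos_left hω',
    sub_nonneg]

theorem ContinuousLinearMap.norm_mobius_le_one_iff {ω : 𝕜} (hω : ‖ω‖ < 1) {f : E →L[𝕜] E}
    (u : (E →L[𝕜] E)ˣ) (hu : (u : E →L[𝕜] E) = 1 - starRingEnd 𝕜 ω • f) :
    ‖(ω • 1 - f) * ↑u⁻¹‖ ≤ 1 ↔ ‖f‖ ≤ 1 := by
  have hinv (y : E) : (↑u⁻¹ : E →L[𝕜] E) ((u : E →L[𝕜] E) y) = y := by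
    rw [← mul_apply_eq_comp, u.inv_mul, one_apply_eq_self]
  simp only [opNorm_le_iff zero_le_one, one_mul]
  calc (∀ x, ‖((ω • 1 - f) * ↑u⁻¹) x‖ ≤ ‖x‖)
      ↔ ∀ y, ‖((ω • 1 - f) * ↑u⁻¹) ((u : E →L[𝕜] E) y)‖ ≤ ‖(u : E →L[𝕜] E) y‖ :=
        (ContinuousLinearEquiv.unitsEquiv 𝕜 E u).surjective.forall
    _ ↔ ∀ y, ‖ω • y - f y‖ ≤ ‖y - starRingEnd 𝕜 ω • f y‖ :=
        forall_congr' fun y => by rw [mul_apply_eq_comp, hinv, hu]; rfl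
    _ ↔ ∀ y, ‖f y‖ ≤ ‖y‖ :=
        forall_congr' fun y => norm_smul_sub_le_norm_sub_conj_smul_iff hω y (f y)

end InnerProductSpace

theorem contraction_iff_mobius_contraction_general
    (n : ℕ) (ω : ℂ) (hω : ‖ω‖ < 1)
    (T : Matrix (Fin n) (Fin n) ℂ)
    (hT : IsUnit ((1 : Matrix (Fin n) (Fin n) ℂ) - (starRingEnd ℂ) ω • T)) :
    IsContraction T ↔ IsContraction (mobius ω T) := by
  obtain ⟨u, hu⟩ := hT
  let φ := Matrix.toEuclideanCLM (𝕜 := ℂ) (n := Fin n)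
  have hφu : φ u = 1 - starRingEnd ℂ ω • φ T := by rw [hu, map_sub, map_one, map_smul]
  have hφM : φ (mobius ω T) = (ω • 1 - φ T) * ↑(Units.map φ.toMonoidHom u)⁻¹ := by
    rw [mobius, ← hu, ← coe_units_inv, map_mul, map_sub, map_smul, map_one,
      Units.coe_map_inv]
    rfl
  rw [IsContraction, IsContraction, hφM,
    ContinuousLinearMap.norm_mobius_le_one_iff hω (Units.map φ.toMonoidHom u) hφu]

theorem contraction_iff_mobius_contraction
    (n : ℕ) (hn : 1 ≤ n) (ω : ℂ) (hω : ‖ω‖ < 1)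
    (T : Matrix (Fin n) (Fin n) ℂ)
    (hT : IsUnit ((1 : Matrix (Fin n) (Fin n) ℂ) - (starRingEnd ℂ) ω • T)) :
    IsContraction T ↔ IsContraction (mobius ω T) :=
  contraction_iff_mobius_contraction_general n ω hω T hT
end

section
/- (Column version of Parrott's theorem.) Let H, K₁, K₂ be complex Hilbert spaces and let A : H → K₁ and C : H → K₂ be bounded operators. Then the column operator [A; C] : H → K₁ ⊕ K₂ is a contraction if and only if C is a contraction and there exists a contraction Z : H → K₁ such that A = Z·D_C, where D_C = (I − C*C)^{1/2}. -/
open ContinuousLinearMap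

/-- The column operator `[A; C] : H → K₁ ⊕ K₂`, where the direct sum carries the `ℓ²` norm. -/
noncomputable def columnOp {H K₁ K₂ : Type*}
    [NormedAddCommGroup H] [InnerProductSpace ℂ H]
    [NormedAddCommGroup K₁] [InnerProductSpace ℂ K₁]
    [NormedAddCommGroup K₂] [InnerProductSpace ℂ K₂]
    (A : H →L[ℂ] K₁) (C : H →L[ℂ] K₂) : H →L[ℂ] WithLp 2 (K₁ × K₂) :=
  ((WithLp.prodContinuousLinearEquiv 2 ℂ K₁ K₂).symm : (K₁ × K₂) →L[ℂ] WithLp 2 (K₁ × K₂)) ∘L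
    (A.prod C)

/-!
The column `[A; C]` is a contraction iff `‖A x‖² + ‖C x‖² ≤ ‖x‖²` for all `x`, while
`‖D_C x‖² = ‖x‖² - ‖C x‖²`. So the condition reads `‖C x‖ ≤ ‖x‖` and `‖A x‖ ≤ ‖D_C x‖`, and
the latter holds iff `A = Z D_C` for a contraction `Z` (Douglas' factorization lemma): `Z` sends
`D_C x` to `A x`, extends by continuity to the closure of the range of `D_C`, and vanishes on its
orthogonal complement.
-/

namespace ContinuousLinearMap

theorem opNorm_le_one_iff_norm_apply_sq_le {𝕜 E F : Type*} [NontriviallyNormedField 𝕜]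
    [SeminormedAddCommGroup E] [NormedSpace 𝕜 E] [SeminormedAddCommGroup F] [NormedSpace 𝕜 F]
    (T : E →L[𝕜] F) :
    ‖T‖ ≤ 1 ↔ ∀ x, ‖T x‖ ^ 2 ≤ ‖x‖ ^ 2 := by
  simp only [opNorm_le_iff zero_le_one, one_mul, sq_le_sq₀ (norm_nonneg _) (norm_nonneg _)]

variable {𝕜 E F G : Type*} [RCLike 𝕜]

theorem exists_opNorm_le_one_eq_comp_of_norm_apply_le
    [AddCommGroup E] [Module 𝕜 E] [TopologicalSpace E]
    [NormedAddCommGroup F] [InnerProductSpace 𝕜 F] [CompleteSpace F]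
    [NormedAddCommGroup G] [NormedSpace 𝕜 G] [CompleteSpace G]
    (A : E →L[𝕜] G) (D : E →L[𝕜] F) (h : ∀ x, ‖A x‖ ≤ ‖D x‖) :
    ∃ Z : F →L[𝕜] G, ‖Z‖ ≤ 1 ∧ A = Z ∘L D := by
  set M := (LinearMap.range (D : E →ₗ[𝕜] F)).topologicalClosure
  let e : E →ₗ[𝕜] M := (D : E →ₗ[𝕜] F).codRestrict M
    fun x ↦ Submodule.le_topologicalClosure _ (LinearMap.mem_range_self (D : E →ₗ[𝕜] F) x)
  have he : DenseRange e := by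
    rw [DenseRange, Subtype.dense_iff, ← Set.range_comp]
    exact (Submodule.topologicalClosure_coe _).subset
  have hAe : ∀ x, ‖A x‖ ≤ 1 * ‖e x‖ := fun x ↦ (one_mul ‖e x‖).symm ▸ h x
  refine ⟨(A : E →ₗ[𝕜] G).extendOfNorm e ∘L M.orthogonalProjectionOnto, ?_, ?_⟩
  · calc _ ≤ ‖(A : E →ₗ[𝕜] G).extendOfNorm e‖ * ‖M.orthogonalProjectionOnto‖ := opNorm_comp_le _ _
      _ ≤ 1 * 1 := by
        gcongr
        exacts [LinearMap.opNorm_extendOfNorm_le he zero_le_one hAe,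
          M.orthogonalProjectionOnto_norm_le]
      _ = 1 := one_mul 1
  · ext x
    have hPD : M.orthogonalProjectionOnto (D x) = e x :=
      Submodule.orthogonalProjectionOnto_mem_subspace_eq_self (e x)
    simp [hPD, LinearMap.extendOfNorm_eq he ⟨1, hAe⟩]

theorem norm_apply_sq_add_norm_apply_sq
    [NormedAddCommGroup E] [InnerProductSpace 𝕜 E] [CompleteSpace E]
    [NormedAddCommGroup F] [InnerProductSpace 𝕜 F] [CompleteSpace F]
    [NormedAddCommGroup G] [InnerProductSpace 𝕜 G] [CompleteSpace G]
    {D : E →L[𝕜] F} {T : E →L[𝕜] G} (h : adjoint D ∘L D = 1 - adjoint T ∘L T) (x : E) :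
    ‖D x‖ ^ 2 + ‖T x‖ ^ 2 = ‖x‖ ^ 2 := by
  rw [apply_norm_sq_eq_inner_adjoint_left, apply_norm_sq_eq_inner_adjoint_left, h, sub_apply, one_apply_eq_self, inner_sub_left, map_sub, sub_add_cancel, inner_self_eq_norm_sq]

end ContinuousLinearMap

theorem norm_columnOp_apply_sq {H K₁ K₂ : Type*}
    [NormedAddCommGroup H] [InnerProductSpace ℂ H]
    [NormedAddCommGroup K₁] [InnerProductSpace ℂ K₁]
    [NormedAddCommGroup K₂] [InnerProductSpace ℂ K₂]
    (A : H →L[ℂ] K₁) (C : H →L[ℂ] K₂) (x : H) :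
    ‖columnOp A C x‖ ^ 2 = ‖A x‖ ^ 2 + ‖C x‖ ^ 2 :=
  WithLp.prod_norm_sq_eq_of_L2 _

theorem parrott_column
    {H K₁ K₂ : Type*}
    [NormedAddCommGroup H] [InnerProductSpace ℂ H] [CompleteSpace H]
    [NormedAddCommGroup K₁] [InnerProductSpace ℂ K₁] [CompleteSpace K₁]
    [NormedAddCommGroup K₂] [InnerProductSpace ℂ K₂] [CompleteSpace K₂]
    (A : H →L[ℂ] K₁) (C : H →L[ℂ] K₂)
    -- `DC` is the defect operator `D_C = (I - C*C)^{1/2}`, i.e. the unique positive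
    -- semidefinite square root of `I - C*C`:
    (DC : H →L[ℂ] H) (hDC_pos : DC.IsPositive)
    (hDC_sq : DC ∘L DC = 1 - (ContinuousLinearMap.adjoint C) ∘L C) :
    ‖columnOp A C‖ ≤ 1 ↔
      (‖C‖ ≤ 1 ∧ ∃ Z : H →L[ℂ] K₁, ‖Z‖ ≤ 1 ∧ A = Z ∘L DC) := by
  have hdefect : ∀ x, ‖DC x‖ ^ 2 + ‖C x‖ ^ 2 = ‖x‖ ^ 2 :=
    norm_apply_sq_add_norm_apply_sq (by rwa [hDC_pos.isSelfAdjoint.adjoint_eq])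
  rw [opNorm_le_one_iff_norm_apply_sq_le, opNorm_le_one_iff_norm_apply_sq_le C]
  simp only [norm_columnOp_apply_sq]
  constructor
  · intro hcol
    refine ⟨fun x ↦ by linarith [hcol x, sq_nonneg ‖A x‖],
      exists_opNorm_le_one_eq_comp_of_norm_apply_le A DC fun x ↦ ?_⟩
    exact (sq_le_sq₀ (norm_nonneg _) (norm_nonneg _)).1 (by linarith [hcol x, hdefect x])
  · rintro ⟨-, Z, hZ, rfl⟩ x
    have hZx : ‖Z (DC x)‖ ≤ ‖DC x‖ := by simpa using Z.le_of_opNorm_le hZ (DC x)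
    simp only [comp_apply]
    linarith [pow_le_pow_left₀ (norm_nonneg _) hZx 2, hdefect x]
end
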